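/- arXiv:0809.4782 — 2 statements merged into one kernel-verified Lean document; each statement's English description precedes it below -/
import Mathlib

section
/- Let 0 → A → B → C → 0 be a short exact sequence in an abelian category and let f = (a, b, c) be an endomorphism of this short exact sequence (a ∈ End A, b ∈ End B, c ∈ End C commuting with the two maps of the sequence). If im a = im a² and ker c = ker c², then the induced sequences 0 → ker a² → ker b² → ker c² → 0 and 0 → im a² → im b² → im c² → 0 are exact. -/
open CategoryTheory CategoryTheory.Limits

/-!
STATEMENT 5: Let `0 → A → B → C → 0` be a short exact sequence in an abelian category and
`(a, b, c)` an endomorphism of it.  If `im a = im a²` and `ker c = ker c²`, then the induced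
sequences `0 → ker a² → ker b² → ker c² → 0` and `0 → im a² → im b² → im c² → 0` are exact.

The induced morphisms between the kernels (resp. images) are characterized by the equations
`u ≫ kernel.ι _ = kernel.ι _ ≫ i` etc., which determine them uniquely.
-/

open CategoryTheory.Abelian.Pseudoelement
open scoped Pseudoelement

private lemma pcomp {𝒟 : Type*} [Category 𝒟] [Abelian 𝒟] {P Q R : 𝒟} (f : P ⟶ Q) (g : Q ⟶ R)
    (x : CategoryTheory.Abelian.Pseudoelement P) :
    pseudoApply (f ≫ g) x = pseudoApply g (pseudoApply f x) :=
  CategoryTheory.Abelian.Pseudoelement.comp_apply f g x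

private lemma pzero {𝒟 : Type*} [Category 𝒟] [Abelian 𝒟] {P : 𝒟} (Q : 𝒟)
    (x : CategoryTheory.Abelian.Pseudoelement P) : pseudoApply (0 : P ⟶ Q) x = 0 :=
  CategoryTheory.Abelian.Pseudoelement.zero_apply Q x

private lemma pmapz {𝒟 : Type*} [Category 𝒟] [Abelian 𝒟] {P Q : 𝒟} (f : P ⟶ Q) :
    pseudoApply f 0 = 0 :=
  CategoryTheory.Abelian.Pseudoelement.apply_zero f

theorem fitting_ses_kernel_image_sequences_exact
    {𝒞 : Type*} [Category 𝒞] [Abelian 𝒞]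
    {A B C : 𝒞} (i : A ⟶ B) (p : B ⟶ C) (w : i ≫ p = 0)
    (hses : (ShortComplex.mk i p w).ShortExact)
    (a : A ⟶ A) (b : B ⟶ B) (c : C ⟶ C)
    (hab : i ≫ b = a ≫ i) (hbc : p ≫ c = b ≫ p)
    (hima : imageSubobject a = imageSubobject (a ≫ a))
    (hkerc : kernelSubobject c = kernelSubobject (c ≫ c))
    -- the induced morphisms between the kernels of the squares
    (u : kernel (a ≫ a) ⟶ kernel (b ≫ b))
    (hu : u ≫ kernel.ι (b ≫ b) = kernel.ι (a ≫ a) ≫ i)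
    (v : kernel (b ≫ b) ⟶ kernel (c ≫ c))
    (hv : v ≫ kernel.ι (c ≫ c) = kernel.ι (b ≫ b) ≫ p)
    (wk : u ≫ v = 0)
    -- the induced morphisms between the images of the squares
    (u' : image (a ≫ a) ⟶ image (b ≫ b))
    (hu' : u' ≫ image.ι (b ≫ b) = image.ι (a ≫ a) ≫ i)
    (v' : image (b ≫ b) ⟶ image (c ≫ c))
    (hv' : v' ≫ image.ι (c ≫ c) = image.ι (b ≫ b) ≫ p)
    (wi : u' ≫ v' = 0) :
    (ShortComplex.mk u v wk).ShortExact ∧ (ShortComplex.mk u' v' wi).ShortExact := by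
  have hmono_i : Mono i := hses.mono_f
  have hepi_p : Epi p := hses.epi_g
  have hi_inj : Function.Injective (pseudoApply i) := pseudo_injective_of_mono i
  have hp_surj : Function.Surjective (pseudoApply p) := pseudo_surjective_of_epi p
  have hexact : ∀ y : B, p y = 0 → ∃ x : A, i x = y := pseudo_exact_of_exact hses.exact
  -- commutation facts
  have hbbp : (b ≫ b) ≫ p = p ≫ (c ≫ c) := by
    rw [Category.assoc, ← hbc, ← Category.assoc, ← hbc, Category.assoc]
  have hiab : i ≫ b ≫ b = (a ≫ a) ≫ i := by
    rw [← Category.assoc, hab, Category.assoc, hab, ← Category.assoc]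
  -- translation of `hima` to pseudoelements
  have ha2 : ∀ x : A, ∃ y : A, (a ≫ a) y = a x := by
    intro x
    obtain ⟨y, hy⟩ := pseudo_surjective_of_epi (factorThruImageSubobject (a ≫ a))
      ((factorThruImageSubobject a ≫ Subobject.ofLE _ _ hima.le) x)
    refine ⟨y, ?_⟩
    have e1 : (a ≫ a) = factorThruImageSubobject (a ≫ a) ≫ (imageSubobject (a ≫ a)).arrow :=
      (imageSubobject_arrow_comp _).symm
    have e2 : a = (factorThruImageSubobject a ≫ Subobject.ofLE _ _ hima.le) ≫
        (imageSubobject (a ≫ a)).arrow := by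
      rw [Category.assoc, Subobject.ofLE_arrow, imageSubobject_arrow_comp]
    rw [e1, pcomp, hy]
    conv_rhs => rw [e2]
    simp only [pcomp]
  -- translation of `hkerc` to pseudoelements
  have hkc0 : kernel.ι (c ≫ c) ≫ c = 0 := by
    have e1 : (kernelSubobject (c ≫ c)).arrow ≫ c = 0 := by
      rw [← Subobject.ofLE_arrow hkerc.ge, Category.assoc, kernelSubobject_arrow_comp,
        comp_zero]
    rw [← kernelSubobject_arrow', Category.assoc, e1, comp_zero]
  have hkc : ∀ z : C, (c ≫ c) z = 0 → c z = 0 := by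
    intro z hz
    obtain ⟨t, ht⟩ := pseudo_exact_of_exact (ShortComplex.exact_kernel (c ≫ c)) z hz
    rw [← ht, ← pcomp, hkc0, pzero]
  constructor
  · -- kernel sequence
    have hmu : Mono u := by
      have : Mono (u ≫ kernel.ι (b ≫ b)) := by rw [hu]; exact mono_comp _ _
      exact mono_of_mono u (kernel.ι (b ≫ b))
    have hev : Epi v := by
      apply epi_of_pseudo_surjective
      intro z
      have hz₀ : (c ≫ c) (kernel.ι (c ≫ c) z) = 0 := by
        rw [← pcomp, kernel.condition, pzero]
      obtain ⟨y, hy⟩ := hp_surj (kernel.ι (c ≫ c) z)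
      have h1 : c (p y) = 0 := by
        apply hkc; rw [hy]; exact hz₀
      have h2 : p (b y) = 0 := by
        rw [← pcomp, ← hbc, pcomp, h1]
      obtain ⟨x₁, hx₁⟩ := hexact (b y) h2
      obtain ⟨x₂, hx₂⟩ := ha2 x₁
      have key : (b ≫ b) y = (b ≫ b) (i x₂) := by
        have l1 : (b ≫ b) y = i ((a ≫ a) x₂) := by
          rw [pcomp, ← hx₁, ← pcomp, hab, pcomp, hx₂]
        have l2 : (b ≫ b) (i x₂) = i ((a ≫ a) x₂) := by
          rw [← pcomp, hiab, pcomp]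
        rw [l1, l2]
      obtain ⟨d, hd0, hd⟩ := sub_of_eq_image (b ≫ b) y (i x₂) key
      have hpd : p d = p y := hd _ p (by rw [← pcomp, w, pzero])
      obtain ⟨w', hw'⟩ := pseudo_exact_of_exact (ShortComplex.exact_kernel (b ≫ b)) d hd0
      refine ⟨w', pseudo_injective_of_mono (kernel.ι (c ≫ c)) ?_⟩
      rw [← pcomp, hv, pcomp, hw', hpd, hy]
    refine { exact := ?_, mono_f := hmu, epi_g := hev }
    apply exact_of_pseudo_exact
    intro t ht
    have h1 : p (kernel.ι (b ≫ b) t) = 0 := by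
      rw [← pcomp, ← hv, pcomp, ht, pmapz]
    obtain ⟨x, hx⟩ := hexact _ h1
    have h2 : i ((a ≫ a) x) = 0 := by
      rw [← pcomp, ← hiab, pcomp, hx, ← pcomp, kernel.condition, pzero]
    have h3 : (a ≫ a) x = 0 := hi_inj (by rw [h2, pmapz])
    obtain ⟨s, hs⟩ := pseudo_exact_of_exact (ShortComplex.exact_kernel (a ≫ a)) x h3
    refine ⟨s, pseudo_injective_of_mono (kernel.ι (b ≫ b)) ?_⟩
    rw [← pcomp, hu, pcomp, hs, hx]
  · -- image sequence
    have hmu' : Mono u' := by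
      have : Mono (u' ≫ image.ι (b ≫ b)) := by rw [hu']; exact mono_comp _ _
      exact mono_of_mono u' (image.ι (b ≫ b))
    have hev' : Epi v' := by
      apply epi_of_pseudo_surjective
      intro z
      obtain ⟨z₀, hz₀⟩ := pseudo_surjective_of_epi (factorThruImage (c ≫ c)) z
      obtain ⟨y, hy⟩ := hp_surj z₀
      refine ⟨factorThruImage (b ≫ b) y, pseudo_injective_of_mono (image.ι (c ≫ c)) ?_⟩
      rw [← pcomp v' (image.ι (c ≫ c)), hv', pcomp (image.ι (b ≫ b)) p,
        ← pcomp (factorThruImage (b ≫ b)) (image.ι (b ≫ b)), image.fac,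
        ← pcomp (b ≫ b) p, hbbp, pcomp p (c ≫ c), hy, ← hz₀,
        ← pcomp (factorThruImage (c ≫ c)) (image.ι (c ≫ c)), image.fac]
    refine { exact := ?_, mono_f := hmu', epi_g := hev' }
    apply exact_of_pseudo_exact
    intro t ht
    have h1 : p (image.ι (b ≫ b) t) = 0 := by
      rw [← pcomp, ← hv', pcomp, ht, pmapz]
    obtain ⟨x, hx⟩ := hexact _ h1
    obtain ⟨y, hy⟩ := pseudo_surjective_of_epi (factorThruImage (b ≫ b)) t
    have hb2y : (b ≫ b) y = i x := by
      rw [← image.fac (b ≫ b), pcomp, hy, hx]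
    have hcc : (c ≫ c) (p y) = 0 := by
      rw [← pcomp, ← hbbp, pcomp, hb2y, ← pcomp, w, pzero]
    have hcpy : c (p y) = 0 := hkc _ hcc
    have hpby : p (b y) = 0 := by
      rw [← pcomp, ← hbc, pcomp, hcpy]
    obtain ⟨x₁, hx₁⟩ := hexact (b y) hpby
    have hiax : i (a x₁) = i x := by
      rw [← pcomp, ← hab, pcomp, hx₁, ← pcomp, hb2y]
    have hax : a x₁ = x := hi_inj hiax
    obtain ⟨s, hs⟩ := ha2 x₁
    refine ⟨factorThruImage (a ≫ a) s, pseudo_injective_of_mono (image.ι (b ≫ b)) ?_⟩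
    rw [← pcomp u' (image.ι (b ≫ b)), hu', pcomp (image.ι (a ≫ a)) i,
      ← pcomp (factorThruImage (a ≫ a)) (image.ι (a ≫ a)), image.fac, hs, hax, hx]
end

section
/- Let 0 → A → B → C → 0 be a short exact sequence in an abelian category and let f = (a, b, c) be an endomorphism of this short exact sequence. Assume that im a = im a², ker a = ker a², A = ker a ⊕ im a, ker c = ker c², im c = im c², and C = ker c ⊕ im c. Then ker b² = ker b³, im b² = im b³, and B = ker b² ⊕ im b². -/
open CategoryTheory CategoryTheory.Limits

/-!
STATEMENT 6: Let `0 → A → B → C → 0` be a short exact sequence in an abelian category and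
`(a, b, c)` an endomorphism of it.  Assume `im a = im a²`, `ker a = ker a²`,
`A = ker a ⊕ im a`, `ker c = ker c²`, `im c = im c²`, and `C = ker c ⊕ im c`.
Then `ker b² = ker b³`, `im b² = im b³`, and `B = ker b² ⊕ im b²`.

Kernels and images are regarded as subobjects; `X = U ⊕ V` for subobjects `U`, `V` of `X` is
rendered as `IsCompl U V` in the subobject lattice of `X` (in an abelian category this says
exactly that the canonical morphism `U ⊕ V → X` is an isomorphism).
-/

section FittingAux

open CategoryTheory.Abelian CategoryTheory.Abelian.Pseudoelement

attribute [local instance] CategoryTheory.Abelian.Pseudoelement.objectToSort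
  CategoryTheory.Abelian.Pseudoelement.homToFun
  CategoryTheory.Abelian.Pseudoelement.setoid
  CategoryTheory.Over.coeFromHom

variable {𝒞 : Type*} [Category 𝒞] [Abelian 𝒞]

/-- If every morphism killed by `q` factors through `P`, then every pseudoelement killed by
`q` lies in `P`. -/
lemma fitting_mem_pseudo_of_comp_zero
    {X R : 𝒞} {P : Subobject X} {q : X ⟶ R}
    (hq : ∀ {T : 𝒞} (h : T ⟶ X), h ≫ q = 0 → ∃ l : T ⟶ (P : 𝒞), l ≫ P.arrow = h)
    (x : X) (hx : (q : X ⟶ R) x = 0) : ∃ u : (P : 𝒞), (P.arrow : (P : 𝒞) ⟶ X) u = x := by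
  revert hx
  refine Quotient.inductionOn x fun t hx => ?_
  have ht : t.hom ≫ q = 0 := (pseudoZero_iff _).1 hx
  obtain ⟨l, hl⟩ := hq t.hom ht
  refine ⟨⟦↑l⟧, ?_⟩
  have h1 : (P.arrow : (P : 𝒞) ⟶ X) ⟦↑l⟧ = ⟦↑(l ≫ P.arrow)⟧ := rfl
  rw [h1]
  exact Quotient.sound ⟨_, 𝟙 _, 𝟙 _, inferInstance, inferInstance, by simp [hl]⟩

lemma fitting_mem_pseudo_of_coker_zero
    {X : 𝒞} (P : Subobject X) (x : X)
    (hx : (cokernel.π P.arrow : X ⟶ _) x = 0) :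
    ∃ u : (P : 𝒞), (P.arrow : (P : 𝒞) ⟶ X) u = x :=
  fitting_mem_pseudo_of_comp_zero
    (fun h h0 => ⟨Abelian.monoLift P.arrow h h0, Abelian.monoLift_comp _ _ _⟩) x hx

lemma fitting_mem_pseudo_of_apply_zero
    {X Y : 𝒞} {f : X ⟶ Y} {W : Subobject X}
    (h : kernelSubobject f ≤ W) (x : X) (hx : (f : X ⟶ Y) x = 0) :
    ∃ u : (W : 𝒞), (W.arrow : (W : 𝒞) ⟶ X) u = x := by
  refine fitting_mem_pseudo_of_comp_zero (q := f) (fun {T} g h0 => ?_) x hx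
  refine ⟨factorThruKernelSubobject f g h0 ≫ Subobject.ofLE _ _ h, ?_⟩
  rw [Category.assoc, Subobject.ofLE_arrow, factorThruKernelSubobject_comp_arrow]

lemma fitting_arrow_comp_eq_zero_of_le_ker
    {X Y : 𝒞} {f : X ⟶ Y} {W : Subobject X}
    (h : W ≤ kernelSubobject f) : W.arrow ≫ f = 0 := by
  rw [← Subobject.ofLE_arrow h, Category.assoc, kernelSubobject_arrow_comp, comp_zero]

lemma fitting_pseudo_zero_of_ker_le
    {X Y Z : 𝒞} {f : X ⟶ Y} {g : X ⟶ Z}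
    (h : kernelSubobject f ≤ kernelSubobject g) (x : X) (hx : (f : X ⟶ Y) x = 0) :
    (g : X ⟶ Z) x = 0 := by
  revert hx
  refine Quotient.inductionOn x fun t hx => ?_
  have ht : t.hom ≫ f = 0 := (pseudoZero_iff _).1 hx
  have harr : (kernelSubobject f).arrow ≫ g = 0 :=
    fitting_arrow_comp_eq_zero_of_le_ker h
  have ht' : t.hom ≫ g = 0 := by
    rw [← factorThruKernelSubobject_comp_arrow f t.hom ht, Category.assoc, harr, comp_zero]
  rw [pseudoApply_mk']
  exact (pseudoZero_iff _).2 ht'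

lemma fitting_ker_le_ker_of_pseudo
    {X Y Z : 𝒞} (f : X ⟶ Y) (g : X ⟶ Z)
    (h : ∀ x : X, (f : X ⟶ Y) x = 0 → (g : X ⟶ Z) x = 0) :
    kernelSubobject f ≤ kernelSubobject g := by
  apply le_kernelSubobject
  apply zero_morphism_ext
  intro t
  have h1 : (f : X ⟶ Y) ((kernelSubobject f).arrow t) = 0 := by
    rw [← Pseudoelement.comp_apply, kernelSubobject_arrow_comp]
    exact zero_apply _ _
  have h2 := h _ h1
  rwa [← Pseudoelement.comp_apply] at h2

lemma fitting_exists_pseudo_of_im_le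
    {X X' Y : 𝒞} {f : X ⟶ Y} {g : X' ⟶ Y}
    (h : imageSubobject f ≤ imageSubobject g) (x : X) :
    ∃ y : X', (g : X' ⟶ Y) y = (f : X ⟶ Y) x := by
  obtain ⟨m, hm⟩ := pseudo_surjective_of_epi (factorThruImageSubobject g)
    ((Subobject.ofLE _ _ h : ((imageSubobject f : 𝒞)) ⟶ _)
      ((factorThruImageSubobject f : X ⟶ _) x))
  refine ⟨m, ?_⟩
  have h1 : (g : X' ⟶ Y) m =
      ((factorThruImageSubobject g ≫ (imageSubobject g).arrow : X' ⟶ Y)) m := by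
    rw [imageSubobject_arrow_comp]
  rw [h1, Pseudoelement.comp_apply, hm, ← Pseudoelement.comp_apply, Subobject.ofLE_arrow,
    ← Pseudoelement.comp_apply, imageSubobject_arrow_comp]

lemma fitting_comp_coker_pi {X Y : 𝒞} (f : X ⟶ Y) :
    f ≫ cokernel.π (imageSubobject f).arrow = 0 := by
  have e : f ≫ cokernel.π (imageSubobject f).arrow =
      factorThruImageSubobject f ≫ (imageSubobject f).arrow ≫
        cokernel.π (imageSubobject f).arrow := by
    rw [← Category.assoc, imageSubobject_arrow_comp]
  rw [e, cokernel.condition, comp_zero]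

lemma fitting_im_le_im_of_pseudo
    {X X' Y : 𝒞} (f : X ⟶ Y) (g : X' ⟶ Y)
    (h : ∀ x : X, ∃ y : X', (g : X' ⟶ Y) y = (f : X ⟶ Y) x) :
    imageSubobject f ≤ imageSubobject g := by
  have hgq : g ≫ cokernel.π (imageSubobject g).arrow = 0 := fitting_comp_coker_pi g
  have hfq : f ≫ cokernel.π (imageSubobject g).arrow = 0 := by
    apply zero_morphism_ext
    intro x
    obtain ⟨y, hy⟩ := h x
    rw [Pseudoelement.comp_apply, ← hy, ← Pseudoelement.comp_apply, hgq]
    exact zero_apply _ _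
  exact imageSubobject_le _ (Abelian.monoLift _ f hfq) (Abelian.monoLift_comp _ _ _)

theorem fitting_ses_middle_decomposition_aux
    {A B C : 𝒞} (i : A ⟶ B) (p : B ⟶ C) (w : i ≫ p = 0)
    (hses : (ShortComplex.mk i p w).ShortExact)
    (a : A ⟶ A) (b : B ⟶ B) (c : C ⟶ C)
    (hab : i ≫ b = a ≫ i) (hbc : p ≫ c = b ≫ p)
    (hima : imageSubobject a = imageSubobject (a ≫ a))
    (hkera : kernelSubobject a = kernelSubobject (a ≫ a))
    (hkerc : kernelSubobject c = kernelSubobject (c ≫ c))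
    (himc : imageSubobject c = imageSubobject (c ≫ c)) :
    kernelSubobject (b ≫ b) = kernelSubobject (b ≫ b ≫ b) ∧
    imageSubobject (b ≫ b) = imageSubobject (b ≫ b ≫ b) ∧
    IsCompl (kernelSubobject (b ≫ b)) (imageSubobject (b ≫ b)) := by
  haveI : Mono i := hses.mono_f
  haveI : Epi p := hses.epi_g
  -- pseudoelement versions of the hypotheses
  have hker_c2 : ∀ z : C, (c : C ⟶ C) ((c : C ⟶ C) z) = 0 → (c : C ⟶ C) z = 0 := fun z hz =>
    fitting_pseudo_zero_of_ker_le hkerc.ge z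
      (by rw [Pseudoelement.comp_apply]; exact hz)
  have hker_a2 : ∀ z : A, (a : A ⟶ A) ((a : A ⟶ A) z) = 0 → (a : A ⟶ A) z = 0 := fun z hz =>
    fitting_pseudo_zero_of_ker_le hkera.ge z
      (by rw [Pseudoelement.comp_apply]; exact hz)
  have him_c2 : ∀ z : C, ∃ y : C, (c : C ⟶ C) ((c : C ⟶ C) y) = (c : C ⟶ C) z := by
    intro z
    obtain ⟨y, hy⟩ := fitting_exists_pseudo_of_im_le himc.le z
    exact ⟨y, by rw [← Pseudoelement.comp_apply]; exact hy⟩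
  have him_a2 : ∀ z : A, ∃ y : A, (a : A ⟶ A) ((a : A ⟶ A) y) = (a : A ⟶ A) z := by
    intro z
    obtain ⟨y, hy⟩ := fitting_exists_pseudo_of_im_le hima.le z
    exact ⟨y, by rw [← Pseudoelement.comp_apply]; exact hy⟩
  have him_a3 : ∀ z : A, ∃ y : A,
      (a : A ⟶ A) ((a : A ⟶ A) ((a : A ⟶ A) y)) = (a : A ⟶ A) z := by
    intro z
    obtain ⟨y1, h1⟩ := him_a2 z
    obtain ⟨y2, h2⟩ := him_a2 y1
    exact ⟨y2, (congrArg (fun q => (a : A ⟶ A) q) h2).trans h1⟩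
  have hexact : ∀ x : B, (p : B ⟶ C) x = 0 → ∃ u : A, (i : A ⟶ B) u = x :=
    fun x hx => Pseudoelement.pseudo_exact_of_exact hses.exact x hx
  have hinj : Function.Injective (i : A ⟶ B) := Pseudoelement.pseudo_injective_of_mono i
  have hsurj : Function.Surjective (p : B ⟶ C) := Pseudoelement.pseudo_surjective_of_epi p
  have hpb : ∀ x : B, (p : B ⟶ C) ((b : B ⟶ B) x) = (c : C ⟶ C) ((p : B ⟶ C) x) := by
    intro x
    calc (p : B ⟶ C) ((b : B ⟶ B) x) = ((b ≫ p : B ⟶ C)) x := (Pseudoelement.comp_apply _ _ _).symm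
      _ = ((p ≫ c : B ⟶ C)) x := by rw [hbc]
      _ = (c : C ⟶ C) ((p : B ⟶ C) x) := Pseudoelement.comp_apply _ _ _
  have hib : ∀ u : A, (b : B ⟶ B) ((i : A ⟶ B) u) = (i : A ⟶ B) ((a : A ⟶ A) u) := by
    intro u
    calc (b : B ⟶ B) ((i : A ⟶ B) u) = ((i ≫ b : A ⟶ B)) u := (Pseudoelement.comp_apply _ _ _).symm
      _ = ((a ≫ i : A ⟶ B)) u := by rw [hab]
      _ = (i : A ⟶ B) ((a : A ⟶ A) u) := Pseudoelement.comp_apply _ _ _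
  -- the key pseudoelement facts about `b`
  have Kb : ∀ x : B, (b : B ⟶ B) ((b : B ⟶ B) ((b : B ⟶ B) x)) = 0 →
      (b : B ⟶ B) ((b : B ⟶ B) x) = 0 := by
    intro x h3
    have e1 : (c : C ⟶ C) ((c : C ⟶ C) ((c : C ⟶ C) ((p : B ⟶ C) x))) = 0 := by
      rw [← hpb x, ← hpb ((b : B ⟶ B) x), ← hpb ((b : B ⟶ B) ((b : B ⟶ B) x)), h3]
      exact Pseudoelement.apply_zero _
    have e2 : (c : C ⟶ C) ((p : B ⟶ C) x) = 0 :=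
      hker_c2 _ (hker_c2 _ e1)
    have e3 : (p : B ⟶ C) ((b : B ⟶ B) x) = 0 := by rw [hpb x]; exact e2
    obtain ⟨v, hv⟩ := hexact _ e3
    have e4 : (b : B ⟶ B) ((b : B ⟶ B) x) = (i : A ⟶ B) ((a : A ⟶ A) v) := by
      rw [← hv]; exact hib v
    have e5 : (i : A ⟶ B) ((a : A ⟶ A) ((a : A ⟶ A) v)) = 0 := by
      calc (i : A ⟶ B) ((a : A ⟶ A) ((a : A ⟶ A) v))
          = (b : B ⟶ B) ((i : A ⟶ B) ((a : A ⟶ A) v)) := (hib _).symm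
        _ = (b : B ⟶ B) ((b : B ⟶ B) ((b : B ⟶ B) x)) := by rw [← e4]
        _ = 0 := h3
    have e6 : (a : A ⟶ A) ((a : A ⟶ A) v) = 0 :=
      Pseudoelement.zero_of_map_zero _ hinj _ e5
    have e7 : (a : A ⟶ A) v = 0 := hker_a2 v e6
    rw [e4, e7]
    exact Pseudoelement.apply_zero _
  have Ib : ∀ x : B, ∃ y : B,
      (b : B ⟶ B) ((b : B ⟶ B) ((b : B ⟶ B) y)) = (b : B ⟶ B) ((b : B ⟶ B) x) := by
    intro x
    obtain ⟨t1, ht1⟩ := him_c2 ((p : B ⟶ C) x)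
    obtain ⟨s, hs⟩ := hsurj t1
    have key : (p : B ⟶ C) ((b : B ⟶ B) ((b : B ⟶ B) x)) =
        (p : B ⟶ C) ((b : B ⟶ B) ((b : B ⟶ B) ((b : B ⟶ B) s))) := by
      calc (p : B ⟶ C) ((b : B ⟶ B) ((b : B ⟶ B) x))
          = (c : C ⟶ C) ((c : C ⟶ C) ((p : B ⟶ C) x)) := by
            rw [hpb ((b : B ⟶ B) x), hpb x]
        _ = (c : C ⟶ C) ((c : C ⟶ C) ((c : C ⟶ C) t1)) :=
            (congrArg (fun q => (c : C ⟶ C) q) ht1).symm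
        _ = (c : C ⟶ C) ((c : C ⟶ C) ((c : C ⟶ C) ((p : B ⟶ C) s))) := by rw [hs]
        _ = (p : B ⟶ C) ((b : B ⟶ B) ((b : B ⟶ B) ((b : B ⟶ B) s))) := by
            rw [hpb ((b : B ⟶ B) ((b : B ⟶ B) s)), hpb ((b : B ⟶ B) s), hpb s]
    obtain ⟨z, hz0, hzp⟩ := Pseudoelement.sub_of_eq_image p _ _ key
    -- `z` lies in the image of `b ≫ b`
    have hbbq : (b ≫ b) ≫ cokernel.π (imageSubobject (b ≫ b)).arrow = 0 :=
      fitting_comp_coker_pi (b ≫ b)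
    have hq3 : (cokernel.π (imageSubobject (b ≫ b)).arrow : B ⟶ _)
        ((b : B ⟶ B) ((b : B ⟶ B) ((b : B ⟶ B) s))) = 0 := by
      have e : (b : B ⟶ B) ((b : B ⟶ B) ((b : B ⟶ B) s)) =
          ((b ≫ b : B ⟶ B)) ((b : B ⟶ B) s) := (Pseudoelement.comp_apply _ _ _).symm
      rw [e, ← Pseudoelement.comp_apply, hbbq]
      exact Pseudoelement.zero_apply _ _
    have hqz : (cokernel.π (imageSubobject (b ≫ b)).arrow : B ⟶ _) z = 0 := by
      rw [hzp _ _ hq3]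
      have e : (b : B ⟶ B) ((b : B ⟶ B) x) = ((b ≫ b : B ⟶ B)) x :=
        (Pseudoelement.comp_apply _ _ _).symm
      rw [e, ← Pseudoelement.comp_apply, hbbq]
      exact Pseudoelement.zero_apply _ _
    obtain ⟨m, hm⟩ := fitting_mem_pseudo_of_coker_zero _ z hqz
    obtain ⟨x2, hx2⟩ := Pseudoelement.pseudo_surjective_of_epi (factorThruImageSubobject (b ≫ b)) m
    have hzb : (b : B ⟶ B) ((b : B ⟶ B) x2) = z := by
      have e : (b : B ⟶ B) ((b : B ⟶ B) x2) = ((b ≫ b : B ⟶ B)) x2 :=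
        (Pseudoelement.comp_apply _ _ _).symm
      have e2 : ((b ≫ b : B ⟶ B)) x2 =
          ((factorThruImageSubobject (b ≫ b) ≫ (imageSubobject (b ≫ b)).arrow : B ⟶ B)) x2 := by
        rw [imageSubobject_arrow_comp]
      rw [e, e2, Pseudoelement.comp_apply, hx2]
      exact hm
    -- chase `z` into `i (a³ w')`
    have e8 : (c : C ⟶ C) ((c : C ⟶ C) ((p : B ⟶ C) x2)) = 0 := by
      have e : (p : B ⟶ C) ((b : B ⟶ B) ((b : B ⟶ B) x2)) =
          (c : C ⟶ C) ((c : C ⟶ C) ((p : B ⟶ C) x2)) := by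
        rw [hpb ((b : B ⟶ B) x2), hpb x2]
      rw [← e, hzb]
      exact hz0
    have e9 : (c : C ⟶ C) ((p : B ⟶ C) x2) = 0 := hker_c2 _ e8
    have e10 : (p : B ⟶ C) ((b : B ⟶ B) x2) = 0 := by rw [hpb x2]; exact e9
    obtain ⟨v, hv⟩ := hexact _ e10
    have hziav : z = (i : A ⟶ B) ((a : A ⟶ A) v) := by
      rw [← hzb, ← hv]
      exact hib v
    obtain ⟨w', hw'⟩ := him_a3 v
    have hz3 : (b : B ⟶ B) ((b : B ⟶ B) ((b : B ⟶ B) ((i : A ⟶ B) w'))) = z := by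
      calc (b : B ⟶ B) ((b : B ⟶ B) ((b : B ⟶ B) ((i : A ⟶ B) w')))
          = (i : A ⟶ B) ((a : A ⟶ A) ((a : A ⟶ A) ((a : A ⟶ A) w'))) := by
            rw [hib w', hib ((a : A ⟶ A) w'), hib ((a : A ⟶ A) ((a : A ⟶ A) w'))]
        _ = (i : A ⟶ B) ((a : A ⟶ A) v) := congrArg (fun q => (i : A ⟶ B) q) hw'
        _ = z := hziav.symm
    -- conclude via the cokernel of `im b³`
    have hb3q : (b ≫ b ≫ b) ≫ cokernel.π (imageSubobject (b ≫ b ≫ b)).arrow = 0 :=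
      fitting_comp_coker_pi (b ≫ b ≫ b)
    have happ3 : ∀ u : B, (cokernel.π (imageSubobject (b ≫ b ≫ b)).arrow : B ⟶ _)
        ((b : B ⟶ B) ((b : B ⟶ B) ((b : B ⟶ B) u))) = 0 := by
      intro u
      have e : (b : B ⟶ B) ((b : B ⟶ B) ((b : B ⟶ B) u)) = ((b ≫ b ≫ b : B ⟶ B)) u := by
        rw [Pseudoelement.comp_apply, Pseudoelement.comp_apply]
      rw [e, ← Pseudoelement.comp_apply, hb3q]
      exact Pseudoelement.zero_apply _ _
    have hq'bbx : (cokernel.π (imageSubobject (b ≫ b ≫ b)).arrow : B ⟶ _)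
        ((b : B ⟶ B) ((b : B ⟶ B) x)) = 0 := by
      rw [← hzp _ _ (happ3 s), ← hz3]
      exact happ3 _
    obtain ⟨m', hm'⟩ := fitting_mem_pseudo_of_coker_zero _ _ hq'bbx
    obtain ⟨y, hy⟩ :=
      Pseudoelement.pseudo_surjective_of_epi (factorThruImageSubobject (b ≫ b ≫ b)) m'
    refine ⟨y, ?_⟩
    have e : (b : B ⟶ B) ((b : B ⟶ B) ((b : B ⟶ B) y)) = ((b ≫ b ≫ b : B ⟶ B)) y := by
      rw [Pseudoelement.comp_apply, Pseudoelement.comp_apply]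
    have e2 : ((b ≫ b ≫ b : B ⟶ B)) y =
        ((factorThruImageSubobject (b ≫ b ≫ b) ≫ (imageSubobject (b ≫ b ≫ b)).arrow : B ⟶ B)) y := by
      rw [imageSubobject_arrow_comp]
    rw [e, e2, Pseudoelement.comp_apply, hy]
    exact hm'
  -- iterated versions
  have Kb4 : ∀ x : B, (b : B ⟶ B) ((b : B ⟶ B) ((b : B ⟶ B) ((b : B ⟶ B) x))) = 0 →
      (b : B ⟶ B) ((b : B ⟶ B) x) = 0 := fun x hx => Kb x (Kb ((b : B ⟶ B) x) hx)
  have Ib4 : ∀ x : B, ∃ y : B,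
      (b : B ⟶ B) ((b : B ⟶ B) ((b : B ⟶ B) ((b : B ⟶ B) y))) =
        (b : B ⟶ B) ((b : B ⟶ B) x) := by
    intro x
    obtain ⟨s, hs⟩ := Ib x
    obtain ⟨t, ht⟩ := Ib s
    exact ⟨t, (congrArg (fun q => (b : B ⟶ B) q) ht).trans hs⟩
  -- conclusion 1: kernels
  have hker : kernelSubobject (b ≫ b) = kernelSubobject (b ≫ b ≫ b) := by
    apply le_antisymm
    · apply fitting_ker_le_ker_of_pseudo
      intro x hx
      rw [← Category.assoc, Pseudoelement.comp_apply, hx]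
      exact Pseudoelement.apply_zero _
    · apply fitting_ker_le_ker_of_pseudo
      intro x hx
      have e : ((b ≫ b ≫ b : B ⟶ B)) x = (b : B ⟶ B) ((b : B ⟶ B) ((b : B ⟶ B) x)) := by
        rw [Pseudoelement.comp_apply, Pseudoelement.comp_apply]
      rw [e] at hx
      rw [Pseudoelement.comp_apply]
      exact Kb x hx
  -- conclusion 2: images
  have him : imageSubobject (b ≫ b) = imageSubobject (b ≫ b ≫ b) := by
    apply le_antisymm
    · apply fitting_im_le_im_of_pseudo
      intro x
      obtain ⟨y, hy⟩ := Ib x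
      refine ⟨y, ?_⟩
      rw [Pseudoelement.comp_apply, Pseudoelement.comp_apply, Pseudoelement.comp_apply]
      exact hy
    · exact imageSubobject_comp_le b (b ≫ b)
  refine ⟨hker, him, ?_⟩
  constructor
  · -- Disjoint
    intro W h1 h2
    have harr : W.arrow = 0 := by
      apply Pseudoelement.zero_morphism_ext
      intro t
      have hx0 : ((b ≫ b : B ⟶ B)) ((W.arrow : (W : 𝒞) ⟶ B) t) = 0 := by
        rw [← Pseudoelement.comp_apply, fitting_arrow_comp_eq_zero_of_le_ker h1]
        exact Pseudoelement.zero_apply _ _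
      obtain ⟨y, hy⟩ := Pseudoelement.pseudo_surjective_of_epi (factorThruImageSubobject (b ≫ b))
        ((Subobject.ofLE _ _ h2 : (W : 𝒞) ⟶ _) t)
      have hby : ((b ≫ b : B ⟶ B)) y = (W.arrow : (W : 𝒞) ⟶ B) t := by
        have e2 : ((b ≫ b : B ⟶ B)) y =
            ((factorThruImageSubobject (b ≫ b) ≫ (imageSubobject (b ≫ b)).arrow : B ⟶ B)) y := by
          rw [imageSubobject_arrow_comp]
        rw [e2, Pseudoelement.comp_apply, hy, ← Pseudoelement.comp_apply, Subobject.ofLE_arrow]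
      have h4 : (b : B ⟶ B) ((b : B ⟶ B) ((b : B ⟶ B) ((b : B ⟶ B) y))) = 0 := by
        have e : (b : B ⟶ B) ((b : B ⟶ B) ((b : B ⟶ B) ((b : B ⟶ B) y))) =
            ((b ≫ b : B ⟶ B)) (((b ≫ b : B ⟶ B)) y) := by
          rw [Pseudoelement.comp_apply, Pseudoelement.comp_apply]
        rw [e, hby]
        exact hx0
      have h5 : (b : B ⟶ B) ((b : B ⟶ B) y) = 0 := Kb4 y h4
      have h6 : ((b ≫ b : B ⟶ B)) y = 0 := by
        rw [Pseudoelement.comp_apply]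
        exact h5
      rw [← hby, h6]
    have hW : W = ⊥ := by
      rw [← Subobject.mk_arrow W]
      exact Subobject.mk_eq_bot_iff_zero.2 harr
    exact hW.le
  · -- Codisjoint
    intro W h1 h2
    have hsurjW : Function.Surjective (W.arrow : (W : 𝒞) ⟶ B) := by
      intro x
      obtain ⟨y, hy⟩ := Ib4 x
      have key : ((b ≫ b : B ⟶ B)) x = ((b ≫ b : B ⟶ B)) (((b ≫ b : B ⟶ B)) y) := by
        have e : ((b ≫ b : B ⟶ B)) (((b ≫ b : B ⟶ B)) y) =
            (b : B ⟶ B) ((b : B ⟶ B) ((b : B ⟶ B) ((b : B ⟶ B) y))) := by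
          rw [Pseudoelement.comp_apply, Pseudoelement.comp_apply]
        have e2 : ((b ≫ b : B ⟶ B)) x = (b : B ⟶ B) ((b : B ⟶ B) x) :=
          Pseudoelement.comp_apply _ _ _
        rw [e, e2, hy]
      obtain ⟨z, hz0, hzp⟩ := Pseudoelement.sub_of_eq_image (b ≫ b) _ _ key
      have hb2q : (b ≫ b) ≫ cokernel.π W.arrow = 0 := by
        have e1 : (b ≫ b) = factorThruImageSubobject (b ≫ b) ≫
            Subobject.ofLE _ _ h2 ≫ W.arrow := by
          rw [Subobject.ofLE_arrow, imageSubobject_arrow_comp]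
        rw [e1, Category.assoc, Category.assoc, cokernel.condition, comp_zero, comp_zero]
      have hqy : (cokernel.π W.arrow : B ⟶ _) (((b ≫ b : B ⟶ B)) y) = 0 := by
        rw [← Pseudoelement.comp_apply, hb2q]
        exact Pseudoelement.zero_apply _ _
      have hqx : (cokernel.π W.arrow : B ⟶ _) x = 0 := by
        rw [← hzp _ _ hqy]
        obtain ⟨u, hu⟩ := fitting_mem_pseudo_of_apply_zero h1 z hz0
        rw [← hu, ← Pseudoelement.comp_apply, cokernel.condition]
        exact Pseudoelement.zero_apply _ _
      exact fitting_mem_pseudo_of_coker_zero W x hqx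
    haveI : Epi W.arrow := Pseudoelement.epi_of_pseudo_surjective _ hsurjW
    haveI : IsIso W.arrow := isIso_of_mono_of_epi _
    exact (Subobject.eq_top_of_isIso_arrow W).ge

end FittingAux

theorem fitting_ses_middle_decomposition
    {𝒞 : Type*} [Category 𝒞] [Abelian 𝒞]
    {A B C : 𝒞} (i : A ⟶ B) (p : B ⟶ C) (w : i ≫ p = 0)
    (hses : (ShortComplex.mk i p w).ShortExact)
    (a : A ⟶ A) (b : B ⟶ B) (c : C ⟶ C)
    (hab : i ≫ b = a ≫ i) (hbc : p ≫ c = b ≫ p)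
    (hima : imageSubobject a = imageSubobject (a ≫ a))
    (hkera : kernelSubobject a = kernelSubobject (a ≫ a))
    (hA : IsCompl (kernelSubobject a) (imageSubobject a))
    (hkerc : kernelSubobject c = kernelSubobject (c ≫ c))
    (himc : imageSubobject c = imageSubobject (c ≫ c))
    (hC : IsCompl (kernelSubobject c) (imageSubobject c)) :
    kernelSubobject (b ≫ b) = kernelSubobject (b ≫ b ≫ b) ∧
    imageSubobject (b ≫ b) = imageSubobject (b ≫ b ≫ b) ∧
    IsCompl (kernelSubobject (b ≫ b)) (imageSubobject (b ≫ b)) :=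
  fitting_ses_middle_decomposition_aux i p w hses a b c hab hbc hima hkera hkerc himc
end
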